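/- arXiv:2308.14635 — 6 statements merged into one kernel-verified Lean document; each statement's English description precedes it below -/
import Mathlib

section
/- Let n ≥ 3 be an integer. Define the integer sequence a_1 = n-1, a_2 = n(n-2), a_{i+2} = (2n-1)a_{i+1} - (n^2-n+1)a_i. Writing 'mod' as a binary operator, for all i ≥ 1: a_i ≡ (i(i-1)/2)·((i mod 3)-1)·n^2 + i·(((i+1) mod 3)-1)·n + (((i-1) mod 3)-1) (mod n^3). -/
private def G (n k : ℤ) : ℤ :=
  (k * (k - 1) / 2) * (k % 3 - 1) * n ^ 2 + k * ((k + 1) % 3 - 1) * n + ((k - 1) % 3 - 1)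

private lemma tdvd (k : ℤ) : (k * (k - 1) / 2) * 2 = k * (k - 1) := by
  apply Int.ediv_mul_cancel
  have := Int.even_mul_succ_self (k - 1)
  have h : k * (k - 1) = (k - 1) * (k - 1 + 1) := by ring
  rw [h]
  exact this.two_dvd

private lemma keyrec (n k : ℤ) :
    n ^ 3 ∣ G n (k + 2) - ((2 * n - 1) * G n (k + 1) - (n ^ 2 - n + 1) * G n k) := by
  have d0 := tdvd k
  have d1 := tdvd (k + 1)
  have d2 := tdvd (k + 2)
  unfold G
  have hr : k % 3 = 0 ∨ k % 3 = 1 ∨ k % 3 = 2 := by omega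
  rcases hr with hr | hr | hr
  · rw [show (k + 2) % 3 = 2 from by omega, show ((k + 2) + 1) % 3 = 0 from by omega,
      show ((k + 2) - 1) % 3 = 1 from by omega, show (k + 1) % 3 = 1 from by omega,
      show ((k + 1) + 1) % 3 = 2 from by omega, show ((k + 1) - 1) % 3 = 0 from by omega,
      hr, show (k - 1) % 3 = 2 from by omega]
    refine ⟨(k * (k - 1) / 2) - n * (k * (k - 1) / 2), mul_left_cancel₀ (by norm_num : (2:ℤ) ≠ 0) ?_⟩
    linear_combination (-n^2) * d0 + n^2 * d2
  · rw [show (k + 2) % 3 = 0 from by omega, show ((k + 2) + 1) % 3 = 1 from by omega,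
      show ((k + 2) - 1) % 3 = 2 from by omega, show (k + 1) % 3 = 2 from by omega,
      show ((k + 1) + 1) % 3 = 0 from by omega, show ((k + 1) - 1) % 3 = 1 from by omega,
      hr, show (k - 1) % 3 = 0 from by omega]
    refine ⟨-(k + 2 * (k * (k - 1) / 2)), mul_left_cancel₀ (by norm_num : (2:ℤ) ≠ 0) ?_⟩
    linear_combination (2*n^3) * d0 - (2*n-1)*n^2 * d1 - n^2 * d2
  · rw [show (k + 2) % 3 = 1 from by omega, show ((k + 2) + 1) % 3 = 2 from by omega,
      show ((k + 2) - 1) % 3 = 0 from by omega, show (k + 1) % 3 = 0 from by omega,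
      show ((k + 1) + 1) % 3 = 1 from by omega, show ((k + 1) - 1) % 3 = 2 from by omega,
      hr, show (k - 1) % 3 = 1 from by omega]
    refine ⟨k + (k * (k - 1) / 2) + n * (k * (k - 1) / 2), mul_left_cancel₀ (by norm_num : (2:ℤ) ≠ 0) ?_⟩
    linear_combination (n^2 - 2*n^3) * d0 + (2*n-1)*n^2 * d1

theorem stmt4 (n : ℕ) (hn : 3 ≤ n) (a : ℕ → ℤ)
    (h1 : a 1 = n - 1) (h2 : a 2 = n * (n - 2))
    (hrec : ∀ i : ℕ, 1 ≤ i →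
      a (i + 2) = (2 * n - 1) * a (i + 1) - (n ^ 2 - n + 1) * a i) :
    ∀ i : ℕ, 1 ≤ i →
      a i ≡ ((i : ℤ) * (i - 1) / 2) * ((i : ℤ) % 3 - 1) * n ^ 2 +
            (i : ℤ) * (((i : ℤ) + 1) % 3 - 1) * n +
            (((i : ℤ) - 1) % 3 - 1) [ZMOD ((n : ℤ) ^ 3)] := by
  have main : ∀ i : ℕ, 1 ≤ i →
      a i ≡ G (n : ℤ) (i : ℤ) [ZMOD ((n : ℤ) ^ 3)] ∧
      a (i + 1) ≡ G (n : ℤ) ((i : ℤ) + 1) [ZMOD ((n : ℤ) ^ 3)] := by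
    intro i hi
    induction i, hi using Nat.le_induction with
    | base =>
      constructor
      · have hg : G (n : ℤ) 1 = (n : ℤ) - 1 := by unfold G; norm_num; ring
        rw [show ((1 : ℕ) : ℤ) = 1 from by norm_num, hg, h1]
      · have hg : G (n : ℤ) 2 = (n : ℤ) * ((n : ℤ) - 2) := by
          unfold G; norm_num; ring
        rw [show ((1 : ℕ) : ℤ) + 1 = 2 from by norm_num, hg,
          show a (1 + 1) = a 2 from rfl, h2]
    | succ i hi ih =>
      refine ⟨by
        rw [show ((i + 1 : ℕ) : ℤ) = (i : ℤ) + 1 from by push_cast; ring]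
        exact ih.2, ?_⟩
      have heq := hrec i hi
      have hcong : a (i + 2) ≡ (2 * (n : ℤ) - 1) * G (n : ℤ) ((i : ℤ) + 1) -
          ((n : ℤ) ^ 2 - (n : ℤ) + 1) * G (n : ℤ) (i : ℤ) [ZMOD ((n : ℤ) ^ 3)] := by
        rw [heq]
        exact Int.ModEq.sub ((ih.2).mul_left _) ((ih.1).mul_left _)
      have hk := keyrec (n : ℤ) (i : ℤ)
      have h2' : (2 * (n : ℤ) - 1) * G (n : ℤ) ((i : ℤ) + 1) -
          ((n : ℤ) ^ 2 - (n : ℤ) + 1) * G (n : ℤ) (i : ℤ) ≡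
          G (n : ℤ) ((i : ℤ) + 2) [ZMOD ((n : ℤ) ^ 3)] :=
        (Int.modEq_iff_dvd.mpr (by simpa using hk)).symm.symm
      have := hcong.trans h2'
      rw [show (((i + 1 : ℕ) : ℤ) + 1) = (i : ℤ) + 2 from by push_cast; ring]
      exact this
  intro i hi
  have := (main i hi).1
  exact this
end

section
/- Let n ≥ 3 be an integer and define the integer sequence a_1 = n-1, a_2 = n(n-2), a_{i+2} = (2n-1)a_{i+1} - (n^2-n+1)a_i. If n ≡ 0 (mod 3) then a_n ≡ -(n(n-1)/2)·n^2 + 1 (mod n^3); if n ≡ 1 (mod 3) then a_n ≡ n^2 - 1 (mod n^3); if n ≡ 2 (mod 3) then a_n ≡ n^2·(n+1)(n-2)/2 (mod n^3). -/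
/-- period-3 sequence 0, 1, -1 -/
def t3 : ℕ → ℤ := fun j => if j % 3 = 0 then 0 else if j % 3 = 1 then 1 else -1

/-- triangular numbers: dd j = j(j+1)/2 -/
def dd : ℕ → ℤ
  | 0 => 0
  | j + 1 => dd j + (j + 1)

lemma t3_add_three (j : ℕ) : t3 (j + 3) = t3 j := by
  simp [t3, Nat.add_mod_right]

lemma t3_sum (j : ℕ) : t3 j + t3 (j + 1) + t3 (j + 2) = 0 := by
  have h : j % 3 = 0 ∨ j % 3 = 1 ∨ j % 3 = 2 := by omega
  have h1 : (j + 1) % 3 = (j % 3 + 1) % 3 := by omega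
  have h2 : (j + 2) % 3 = (j % 3 + 2) % 3 := by omega
  rcases h with h | h | h <;> simp [t3, h1, h2, h]

lemma two_dd (j : ℕ) : 2 * dd j = (j : ℤ) * ((j : ℤ) + 1) := by
  induction j with
  | zero => simp [dd]
  | succ k ih => simp only [dd]; push_cast; push_cast at ih; linarith

/-- candidate closed form for a (j+1) mod n^3 -/
def Gf (n : ℤ) (j : ℕ) : ℤ :=
  t3 (j + 2) + ((j : ℤ) + 1) * n * t3 (j + 1) + dd j * n ^ 2 * t3 j

lemma Gf_rec (n : ℤ) (j : ℕ) :
    Gf n (j + 2) ≡ (2 * n - 1) * Gf n (j + 1) - (n ^ 2 - n + 1) * Gf n j [ZMOD n ^ 3] := by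
  have hz : t3 (j + 2) = -t3 j - t3 (j + 1) := by have := t3_sum j; linarith
  have e4 : t3 (j + 4) = t3 (j + 1) := t3_add_three (j + 1)
  have e3 : t3 (j + 3) = t3 j := t3_add_three j
  have hd1 : dd (j + 1) = dd j + (j + 1) := rfl
  have hd2 : dd (j + 2) = dd (j + 1) + (j + 2) := rfl
  have key : (2 * n - 1) * Gf n (j + 1) - (n ^ 2 - n + 1) * Gf n j - Gf n (j + 2)
      = n ^ 3 * ((2 * dd (j + 1) - ((j : ℤ) + 1)) * t3 (j + 1) + dd j * t3 j
          - n * dd j * t3 j) := by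
    simp only [Gf, show j + 1 + 2 = j + 3 from rfl, show j + 2 + 2 = j + 4 from rfl,
      show j + 1 + 1 = j + 2 from rfl, show j + 2 + 1 = j + 3 from rfl, e4, e3, hd2, hd1]
    push_cast
    rw [hz]
    ring
  have : n ^ 3 ∣ ((2 * n - 1) * Gf n (j + 1) - (n ^ 2 - n + 1) * Gf n j) - Gf n (j + 2) :=
    ⟨_, key⟩
  exact (Int.ModEq.symm (Int.modEq_iff_dvd.mpr (by simpa using this))).symm

theorem stmt5 (n : ℕ) (hn : 3 ≤ n) (a : ℕ → ℤ)
    (h1 : a 1 = n - 1) (h2 : a 2 = n * (n - 2))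
    (hrec : ∀ i : ℕ, 1 ≤ i →
      a (i + 2) = (2 * n - 1) * a (i + 1) - (n ^ 2 - n + 1) * a i) :
    (n % 3 = 0 → a n ≡ -((n : ℤ) * (n - 1) / 2) * n ^ 2 + 1 [ZMOD ((n : ℤ) ^ 3)]) ∧
    (n % 3 = 1 → a n ≡ (n : ℤ) ^ 2 - 1 [ZMOD ((n : ℤ) ^ 3)]) ∧
    (n % 3 = 2 → a n ≡ (n : ℤ) ^ 2 * ((n + 1) * (n - 2)) / 2 [ZMOD ((n : ℤ) ^ 3)]) := by
  set N : ℤ := (n : ℤ) with hN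
  -- main induction
  have key : ∀ j : ℕ, a (j + 1) ≡ Gf N j [ZMOD N ^ 3] ∧ a (j + 2) ≡ Gf N (j + 1) [ZMOD N ^ 3] := by
    intro j
    induction j with
    | zero =>
      constructor
      · have : Gf N 0 = N - 1 := by simp [Gf, t3, dd]; ring
        rw [h1, this]
      · have : Gf N 1 = N * (N - 2) := by simp [Gf, t3, dd]; ring
        rw [h2, this]
    | succ k ih =>
      refine ⟨ih.2, ?_⟩
      have hr := hrec (k + 1) (by omega)
      have : a (k + 1 + 2) ≡ (2 * N - 1) * Gf N (k + 1) - (N ^ 2 - N + 1) * Gf N k [ZMOD N ^ 3] := by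
        rw [hr]
        exact Int.ModEq.sub (Int.ModEq.mul_left _ ih.2) (Int.ModEq.mul_left _ ih.1)
      exact this.trans (Gf_rec N k).symm
  have hmain : a n ≡ Gf N (n - 1) [ZMOD N ^ 3] := by
    have hh := (key (n - 1)).1
    rwa [show n - 1 + 1 = n from by omega] at hh
  -- compute Gf N (n-1)
  have hGf : Gf N (n - 1) = t3 (n + 1) + N * N * t3 n + dd (n - 1) * N ^ 2 * t3 (n - 1) := by
    simp only [Gf, show n - 1 + 2 = n + 1 from by omega, show n - 1 + 1 = n from by omega]
    have : ((n - 1 : ℕ) : ℤ) + 1 = N := by push_cast [Nat.cast_sub (by omega : 1 ≤ n)]; ring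
    rw [this]
  have h2d : 2 * dd (n - 1) = (N - 1) * N := by
    have := two_dd (n - 1)
    rw [Nat.cast_sub (by omega : 1 ≤ n)] at this
    push_cast at this ⊢
    linarith
  refine ⟨?_, ?_, ?_⟩
  · intro h0
    have e1 : t3 (n + 1) = 1 := by simp [t3, show (n + 1) % 3 = 1 from by omega]
    have e2 : t3 n = 0 := by simp [t3, h0]
    have e3 : t3 (n - 1) = -1 := by simp [t3, show (n - 1) % 3 = 2 from by omega]
    have hq : N * (N - 1) / 2 = dd (n - 1) := by
      rw [show N * (N - 1) = 2 * dd (n - 1) from by linarith,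
        Int.mul_ediv_cancel_left _ two_ne_zero]
    have : Gf N (n - 1) = -(N * (N - 1) / 2) * N ^ 2 + 1 := by
      rw [hGf, e1, e2, e3, hq]; ring
    rw [← this]; exact hmain
  · intro h0
    have e1 : t3 (n + 1) = -1 := by simp [t3, show (n + 1) % 3 = 2 from by omega]
    have e2 : t3 n = 1 := by simp [t3, h0]
    have e3 : t3 (n - 1) = 0 := by simp [t3, show (n - 1) % 3 = 0 from by omega]
    have : Gf N (n - 1) = N ^ 2 - 1 := by rw [hGf, e1, e2, e3]; ring
    rw [← this]; exact hmain
  · intro h0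
    have e1 : t3 (n + 1) = 0 := by simp [t3, show (n + 1) % 3 = 0 from by omega]
    have e2 : t3 n = -1 := by simp [t3, h0]
    have e3 : t3 (n - 1) = 1 := by simp [t3, show (n - 1) % 3 = 1 from by omega]
    have hq : N ^ 2 * ((N + 1) * (N - 2)) / 2 = dd (n - 1) * N ^ 2 - N ^ 2 := by
      rw [show N ^ 2 * ((N + 1) * (N - 2)) = 2 * (dd (n - 1) * N ^ 2 - N ^ 2) from by
        linear_combination -N ^ 2 * h2d,
        Int.mul_ediv_cancel_left _ two_ne_zero]
    have : Gf N (n - 1) = N ^ 2 * ((N + 1) * (N - 2)) / 2 := by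
      rw [hGf, e1, e2, e3, hq]; ring
    rw [← this]; exact hmain
end

section
/- Let n ≥ 3 with n ≡ 0 or 1 (mod 3), and define the integer sequence a_1 = n-1, a_2 = n(n-2), a_{i+2} = (2n-1)a_{i+1} - (n^2-n+1)a_i. Then gcd(n^n, a_n) = 1. -/
theorem stmtX (n : ℕ) (hn : 3 ≤ n) (a : ℕ → ℤ)
    (h1 : a 1 = n - 1) (h2 : a 2 = n * (n - 2))
    (hrec : ∀ i : ℕ, 1 ≤ i →
      a (i + 2) = (2 * n - 1) * a (i + 1) - (n ^ 2 - n + 1) * a i) :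
    (n % 3 = 0 ∨ n % 3 = 1) →
    Int.gcd ((n : ℤ) ^ n) (a n) = 1 := by
  intro hmod
  set f : ℕ → ℤ := fun i => if i % 3 = 1 then -1 else if i % 3 = 2 then 0 else 1 with hf
  have key : ∀ i, 1 ≤ i → ((n:ℤ) ∣ a i - f i) ∧ ((n:ℤ) ∣ a (i+1) - f (i+1)) := by
    intro i hi
    induction i, hi using Nat.le_induction with
    | base =>
      constructor
      · refine ⟨1, ?_⟩
        simp only [hf, h1]
        norm_num
      · refine ⟨(n:ℤ) - 2, ?_⟩
        simp only [hf, h2]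
        norm_num
    | succ i hi ih =>
      obtain ⟨hd1, hd2⟩ := ih
      refine ⟨hd2, ?_⟩
      obtain ⟨k, hk⟩ := hd1
      obtain ⟨m, hm⟩ := hd2
      have hfs : f i + f (i+1) + f (i+2) = 0 := by
        have h3 : i % 3 = 0 ∨ i % 3 = 1 ∨ i % 3 = 2 := by omega
        rcases h3 with h | h | h
        · have h1' : (i+1) % 3 = 1 := by omega
          have h2' : (i+2) % 3 = 2 := by omega
          simp [hf, h, h1', h2']
        · have h1' : (i+1) % 3 = 2 := by omega
          have h2' : (i+2) % 3 = 0 := by omega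
          simp [hf, h, h1', h2']
        · have h1' : (i+1) % 3 = 0 := by omega
          have h2' : (i+2) % 3 = 1 := by omega
          simp [hf, h, h1', h2']
      refine ⟨(2*(n:ℤ)-1)*m - ((n:ℤ)^2-(n:ℤ)+1)*k + (2*f (i+1) - ((n:ℤ)-1)*f i), ?_⟩
      have hr := hrec i hi
      linear_combination hr + (2*(n:ℤ)-1)*hm - ((n:ℤ)^2-(n:ℤ)+1)*hk - hfs
  obtain ⟨hd, -⟩ := key n (by omega)
  obtain ⟨k, hk⟩ := hd
  rw [← Int.isCoprime_iff_gcd_eq_one]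
  apply IsCoprime.pow_left
  rcases hmod with h | h
  · have hfn : f n = 1 := by simp [hf, h]
    rw [hfn] at hk
    exact ⟨-k, 1, by linear_combination hk⟩
  · have hfn : f n = -1 := by simp [hf, h]
    rw [hfn] at hk
    exact ⟨k, -1, by linear_combination -hk⟩
end

section
/- Let n ≥ 14 with n ≡ 2 (mod 12), and define the integer sequence a_1 = n-1, a_2 = n(n-2), a_{i+2} = (2n-1)a_{i+1} - (n^2-n+1)a_i. Then ν_2(a_n) = 3 + ν_2(⌊n/12⌋), where ν_2 denotes the 2-adic valuation. -/
/-- Lucas `U`-sequence for `P = 2n-1`, `Q = n^2-n+1`. -/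
def wseq (n : ℕ) : ℕ → ℤ
  | 0 => 0
  | 1 => 1
  | i + 2 => (2 * (n : ℤ) - 1) * wseq n (i + 1) - ((n : ℤ) ^ 2 - n + 1) * wseq n i

/-- Auxiliary sequence. -/
def sseq : ℕ → ℤ
  | 0 => 1
  | 1 => 0
  | i + 2 => 3 * sseq (i + 1) - 3 * sseq i

lemma wseq_rec (n : ℕ) (i : ℕ) :
    wseq n (i + 2) = (2 * (n : ℤ) - 1) * wseq n (i + 1) - ((n : ℤ) ^ 2 - n + 1) * wseq n i := by
  rfl

lemma sseq_rec (i : ℕ) : sseq (i + 2) = 3 * sseq (i + 1) - 3 * sseq i := rfl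

/-- Addition formula. -/
lemma wseq_add (n : ℕ) : ∀ i j : ℕ, wseq n (i + j + 1) =
    wseq n (i + 1) * wseq n (j + 1) - ((n : ℤ) ^ 2 - n + 1) * wseq n i * wseq n j := by
  intro i
  induction i using Nat.twoStepInduction with
  | zero => intro j; simp [wseq]
  | one =>
    intro j
    have e : 1 + j + 1 = j + 2 := by omega
    rw [e, wseq_rec]
    show _ = wseq n 2 * _ - _
    rw [show wseq n 2 = 2 * (n:ℤ) - 1 by rw [wseq_rec]; simp [wseq]]
    simp [wseq]
  | more i ih1 ih2 =>
    intro j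
    have e : i + 2 + j + 1 = (i + j + 1) + 2 := by omega
    have e2 : i + 1 + j + 1 = (i + j + 1) + 1 := by omega
    rw [e, wseq_rec]
    have h2 := ih2 j
    rw [e2] at h2
    have hr3 : wseq n (i + 3) = (2 * (n:ℤ) - 1) * wseq n (i + 2) - ((n : ℤ) ^ 2 - n + 1) * wseq n (i + 1) :=
      wseq_rec n (i + 1)
    rw [h2, ih1 j, hr3, wseq_rec n i]
    ring

/-- The sequence `s` at indices `6k` and `6k+1`. -/
lemma sseq_six : ∀ k : ℕ, sseq (6 * k) = (-27) ^ k ∧ sseq (6 * k + 1) = 0 := by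
  intro k
  induction k with
  | zero => exact ⟨rfl, rfl⟩
  | succ k ih =>
    obtain ⟨h0, h1⟩ := ih
    have e2 : sseq (6 * k + 2) = 3 * sseq (6 * k + 1) - 3 * sseq (6 * k) := sseq_rec _
    have e3 : sseq (6 * k + 3) = 3 * sseq (6 * k + 2) - 3 * sseq (6 * k + 1) := sseq_rec _
    have e4 : sseq (6 * k + 4) = 3 * sseq (6 * k + 3) - 3 * sseq (6 * k + 2) := sseq_rec _
    have e5 : sseq (6 * k + 5) = 3 * sseq (6 * k + 4) - 3 * sseq (6 * k + 3) := sseq_rec _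
    have e6 : sseq (6 * k + 6) = 3 * sseq (6 * k + 5) - 3 * sseq (6 * k + 4) := sseq_rec _
    have e7 : sseq (6 * k + 7) = 3 * sseq (6 * k + 6) - 3 * sseq (6 * k + 5) := sseq_rec _
    have f6 : 6 * (k + 1) = 6 * k + 6 := by ring
    have f7 : 6 * (k + 1) + 1 = 6 * k + 7 := by ring
    constructor
    · rw [f6, e6, e5, e4, e3, e2, h0, h1, pow_succ]; ring
    · rw [f7, e7, e6, e5, e4, e3, e2, h0, h1]; ring

/-- Expansion of `c_j = W (j+2) - (n+1) W (j+1)` to first order in `d = n - 2`. -/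
lemma cseq_expand (n : ℕ) : ∀ j : ℕ, ∃ R : ℤ,
    wseq n (j + 2) - ((n : ℤ) + 1) * wseq n (j + 1) =
      sseq (j + 1) + ((j : ℤ) + 1) * ((n : ℤ) - 2) * sseq j + ((n : ℤ) - 2) ^ 2 * R := by
  intro j
  induction j using Nat.twoStepInduction with
  | zero =>
    refine ⟨0, ?_⟩
    rw [wseq_rec]
    simp [wseq, sseq]
    ring
  | one =>
    refine ⟨1, ?_⟩
    have h3 : wseq n 3 = (2 * (n:ℤ) - 1) * wseq n 2 - ((n : ℤ) ^ 2 - n + 1) * wseq n 1 :=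
      wseq_rec n 1
    rw [h3, show wseq n 2 = 2 * (n:ℤ) - 1 by rw [wseq_rec]; simp [wseq]]
    simp [wseq, sseq]
    push_cast
    ring
  | more j ih1 ih2 =>
    obtain ⟨R1, h1⟩ := ih1
    obtain ⟨R2, h2⟩ := ih2
    set d : ℤ := (n : ℤ) - 2 with hd
    refine ⟨(2 * (j:ℤ) + 3) * sseq (j + 1) - 3 * ((j:ℤ) + 1) * sseq j + 3 * R2 - 3 * R1
      + d * (2 * R2 - 3 * R1 - ((j:ℤ) + 1) * sseq j) - d ^ 2 * R1, ?_⟩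
    have hr1 : wseq n (j + 4) = (2 * (n:ℤ) - 1) * wseq n (j + 3) - ((n : ℤ) ^ 2 - n + 1) * wseq n (j + 2) :=
      wseq_rec n (j + 2)
    have hr0 : wseq n (j + 3) = (2 * (n:ℤ) - 1) * wseq n (j + 2) - ((n : ℤ) ^ 2 - n + 1) * wseq n (j + 1) :=
      wseq_rec n (j + 1)
    have hs3 : sseq (j + 3) = 3 * sseq (j + 2) - 3 * sseq (j + 1) := sseq_rec (j + 1)
    have hs2 : sseq (j + 2) = 3 * sseq (j + 1) - 3 * sseq j := sseq_rec j
    rw [hs2] at h2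
    rw [hr1, hs3, hs2]
    push_cast at h1 h2 ⊢
    linear_combination (-(n:ℤ) - 1) * hr0 + (2 * (n:ℤ) - 1) * h2 - ((n : ℤ) ^ 2 - n + 1) * h1

theorem stmt9 (n : ℕ) (hn : 14 ≤ n) (hmod : n % 12 = 2) (a : ℕ → ℤ)
    (h1 : a 1 = n - 1) (h2 : a 2 = n * (n - 2))
    (hrec : ∀ i : ℕ, 1 ≤ i →
      a (i + 2) = (2 * n - 1) * a (i + 1) - (n ^ 2 - n + 1) * a i) :
    padicValInt 2 (a n) = 3 + padicValNat 2 (n / 12) := by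
  set W := wseq n with hW
  set k := n / 12 with hk
  set m := n / 2 with hm
  have hm6 : m = 6 * k + 1 := by omega
  have hn2 : n = 2 * m := by omega
  have hk1 : 1 ≤ k := by omega
  -- a is given by W
  have key : ∀ i : ℕ, a (i + 1) = W (i + 2) - n * W (i + 1) := by
    intro i
    induction i using Nat.twoStepInduction with
    | zero =>
      rw [h1]
      show _ = wseq n 2 - _ * wseq n 1
      rw [show wseq n 2 = 2 * (n:ℤ) - 1 by rw [wseq_rec]; simp [wseq]]
      simp [wseq]
      ring
    | one =>
      rw [h2]
      show _ = wseq n 3 - _ * wseq n 2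
      have h3 : wseq n 3 = (2 * (n:ℤ) - 1) * wseq n 2 - ((n : ℤ) ^ 2 - n + 1) * wseq n 1 :=
        wseq_rec n 1
      rw [h3, show wseq n 2 = 2 * (n:ℤ) - 1 by rw [wseq_rec]; simp [wseq]]
      simp [wseq]
      ring
    | more i ih1 ih2 =>
      have hr := hrec (i + 1) (by omega)
      have e : i + 1 + 2 = i + 2 + 1 := by omega
      rw [e] at hr
      have hr4 : W (i + 4) = (2 * (n:ℤ) - 1) * W (i + 3) - ((n : ℤ) ^ 2 - n + 1) * W (i + 2) :=
        wseq_rec n (i + 2)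
      have hr3 : W (i + 3) = (2 * (n:ℤ) - 1) * W (i + 2) - ((n : ℤ) ^ 2 - n + 1) * W (i + 1) :=
        wseq_rec n (i + 1)
      rw [hr, ih1, ih2, hr4, hr3]
      push_cast
      ring
  have han : a n = W (n + 1) - n * W n := by
    have h := key (n - 1)
    have e1 : n - 1 + 1 = n := by omega
    have e2 : n - 1 + 2 = n + 1 := by omega
    rwa [e1, e2] at h
  -- factorization a n = b * c
  set b : ℤ := W (m + 1) - ((n : ℤ) - 1) * W m with hb
  set c : ℤ := W (m + 1) - ((n : ℤ) + 1) * W m with hc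
  have hdbl1 : W (2 * m + 1) = W (m + 1) * W (m + 1) - ((n : ℤ) ^ 2 - n + 1) * W m * W m := by
    have h := wseq_add n m m
    have e : m + m + 1 = 2 * m + 1 := by ring
    rwa [e] at h
  have hdbl2 : W (2 * m) = W m * (2 * W (m + 1) - (2 * (n : ℤ) - 1) * W m) := by
    have h := wseq_add n m (m - 1)
    rw [← hW] at h
    have e : m + (m - 1) + 1 = 2 * m := by omega
    have e2 : m - 1 + 1 = m := by omega
    rw [e, e2] at h
    have hr : W (m - 1 + 2) = (2 * (n : ℤ) - 1) * W (m - 1 + 1) - ((n : ℤ) ^ 2 - n + 1) * W (m - 1) :=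
      wseq_rec n (m - 1)
    have e3 : m - 1 + 2 = m + 1 := by omega
    rw [e3, e2] at hr
    rw [h]
    have hq : ((n : ℤ) ^ 2 - n + 1) * W (m - 1) = (2 * (n : ℤ) - 1) * W m - W (m + 1) := by
      linarith [hr]
    calc W (m + 1) * W m - ((n : ℤ) ^ 2 - n + 1) * W m * W (m - 1)
        = W (m + 1) * W m - W m * (((n : ℤ) ^ 2 - n + 1) * W (m - 1)) := by ring
      _ = W (m + 1) * W m - W m * ((2 * (n : ℤ) - 1) * W m - W (m + 1)) := by rw [hq]
      _ = W m * (2 * W (m + 1) - (2 * (n : ℤ) - 1) * W m) := by ring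
  have hfact : a n = b * c := by
    rw [han]
    rw [show n + 1 = 2 * m + 1 by omega, show (W n : ℤ) = W (2 * m) by rw [← hn2]]
    rw [hdbl1, hdbl2, hb, hc]
    ring
  -- b ≡ 2 mod 4
  have hcast4 : ((n : ℕ) : ZMod 4) = 2 := by
    conv_lhs => rw [show n = 4 * (n / 4) + 2 by omega]
    push_cast
    rw [show (4 : ZMod 4) = 0 by decide]
    ring
  have hcast4' : (((n : ℕ) : ℤ) : ZMod 4) = 2 := by rw [Int.cast_natCast, hcast4]
  have step4 : ∀ i : ℕ, ((W (i + 2) : ℤ) : ZMod 4) = 3 * ((W (i + 1) : ℤ) : ZMod 4) - 3 * ((W i : ℤ) : ZMod 4) := by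
    intro i
    rw [show W (i + 2) = (2 * (n:ℤ) - 1) * W (i + 1) - ((n : ℤ) ^ 2 - n + 1) * W i from wseq_rec n i]
    push_cast
    rw [hcast4]
    ring
  have hWmod : ∀ j : ℕ, ((W (6 * j + 1) : ℤ) : ZMod 4) = 1 ∧ ((W (6 * j + 2) : ℤ) : ZMod 4) = 3 := by
    intro j
    induction j with
    | zero =>
      constructor
      · show ((wseq n 1 : ℤ) : ZMod 4) = 1
        rw [show wseq n 1 = 1 from rfl]; decide
      · have h : ((W 2 : ℤ) : ZMod 4) = 3 * ((W 1 : ℤ) : ZMod 4) - 3 * ((W 0 : ℤ) : ZMod 4) :=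
          step4 0
        show ((W 2 : ℤ) : ZMod 4) = 3
        rw [h, show W 1 = 1 from rfl, show W 0 = 0 from rfl]
        decide
    | succ j ih =>
      obtain ⟨g1, g2⟩ := ih
      have g3 : ((W (6 * j + 3) : ℤ) : ZMod 4) = 2 := by
        have h : ((W (6 * j + 3) : ℤ) : ZMod 4) =
            3 * ((W (6 * j + 2) : ℤ) : ZMod 4) - 3 * ((W (6 * j + 1) : ℤ) : ZMod 4) :=
          step4 (6 * j + 1)
        rw [h, g1, g2]; decide
      have g4 : ((W (6 * j + 4) : ℤ) : ZMod 4) = 1 := by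
        have h : ((W (6 * j + 4) : ℤ) : ZMod 4) =
            3 * ((W (6 * j + 3) : ℤ) : ZMod 4) - 3 * ((W (6 * j + 2) : ℤ) : ZMod 4) :=
          step4 (6 * j + 2)
        rw [h, g2, g3]; decide
      have g5 : ((W (6 * j + 5) : ℤ) : ZMod 4) = 1 := by
        have h : ((W (6 * j + 5) : ℤ) : ZMod 4) =
            3 * ((W (6 * j + 4) : ℤ) : ZMod 4) - 3 * ((W (6 * j + 3) : ℤ) : ZMod 4) :=
          step4 (6 * j + 3)
        rw [h, g3, g4]; decide
      have g6 : ((W (6 * j + 6) : ℤ) : ZMod 4) = 0 := by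
        have h : ((W (6 * j + 6) : ℤ) : ZMod 4) =
            3 * ((W (6 * j + 5) : ℤ) : ZMod 4) - 3 * ((W (6 * j + 4) : ℤ) : ZMod 4) :=
          step4 (6 * j + 4)
        rw [h, g4, g5]; decide
      have g7 : ((W (6 * j + 7) : ℤ) : ZMod 4) = 1 := by
        have h : ((W (6 * j + 7) : ℤ) : ZMod 4) =
            3 * ((W (6 * j + 6) : ℤ) : ZMod 4) - 3 * ((W (6 * j + 5) : ℤ) : ZMod 4) :=
          step4 (6 * j + 5)
        rw [h, g5, g6]; decide
      have g8 : ((W (6 * j + 8) : ℤ) : ZMod 4) = 3 := by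
        have h : ((W (6 * j + 8) : ℤ) : ZMod 4) =
            3 * ((W (6 * j + 7) : ℤ) : ZMod 4) - 3 * ((W (6 * j + 6) : ℤ) : ZMod 4) :=
          step4 (6 * j + 6)
        rw [h, g6, g7]; decide
      exact ⟨g7, g8⟩
  -- b = 2 * u with u odd
  have hbmod : ((b : ℤ) : ZMod 4) = 2 := by
    obtain ⟨g1, g2⟩ := hWmod k
    have h : ((b : ℤ) : ZMod 4) =
        ((W (m + 1) : ℤ) : ZMod 4) - ((((n : ℕ) : ℤ) : ZMod 4) - 1) * ((W m : ℤ) : ZMod 4) := by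
      rw [hb]; push_cast; ring
    rw [h, hcast4', show m + 1 = 6 * k + 2 by omega, show m = 6 * k + 1 from hm6, g1, g2]
    decide
  have hb4 : (4 : ℤ) ∣ b - 2 := by
    have h : ((b - 2 : ℤ) : ZMod 4) = 0 := by push_cast; rw [hbmod]; decide
    exact (ZMod.intCast_zmod_eq_zero_iff_dvd _ _).mp h
  obtain ⟨v, hv⟩ := hb4
  set u : ℤ := 2 * v + 1 with hu
  have hbu : b = 2 * u := by rw [hu]; omega
  have hu_odd : Odd u := ⟨v, by rw [hu]⟩
  -- c = (n - 2) * t with t odd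
  obtain ⟨R, hR⟩ := cseq_expand n (6 * k)
  rw [← hW] at hR
  have hnz : ((n : ℕ) : ℤ) = 2 * (m : ℤ) := by exact_mod_cast congrArg (Nat.cast (R := ℤ)) hn2
  set t : ℤ := (6 * (k : ℤ) + 1) * (-27) ^ k + ((n : ℤ) - 2) * R with hT
  have hcc : c = ((n : ℤ) - 2) * t := by
    obtain ⟨hs0, hs1⟩ := sseq_six k
    rw [hc, show m + 1 = 6 * k + 2 by omega, show m = 6 * k + 1 from hm6]
    have e : (6 * k + 2) = (6 * k) + 2 := by omega
    rw [e, hR, hs0, hs1, hT]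
    push_cast
    ring
  have ht_odd : Odd t := by
    have o1 : Odd (6 * (k : ℤ) + 1) := ⟨3 * k, by ring⟩
    have o2 : Odd ((-27 : ℤ) ^ k) := (show Odd (-27 : ℤ) from ⟨-14, by norm_num⟩).pow
    have e3 : Even ((n : ℤ) - 2) := ⟨(m : ℤ) - 1, by omega⟩
    rw [hT]
    exact (o1.mul o2).add_even (e3.mul_right R)
  -- nonvanishing
  have hd0 : ((n : ℤ) - 2) ≠ 0 := by
    have : (14 : ℤ) ≤ (n : ℤ) := by exact_mod_cast hn
    omega
  have ht0 : t ≠ 0 := by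
    have := Int.odd_iff.mp ht_odd
    omega
  have hu0 : u ≠ 0 := by
    have := Int.odd_iff.mp hu_odd
    omega
  -- valuations
  have natAbs_u_odd : ¬ 2 ∣ u.natAbs := by
    have h := Int.natAbs_odd.mpr hu_odd
    have := Nat.odd_iff.mp h
    omega
  have natAbs_t_odd : ¬ 2 ∣ t.natAbs := by
    have h := Int.natAbs_odd.mpr ht_odd
    have := Nat.odd_iff.mp h
    omega
  have hval_b : padicValInt 2 b = 1 := by
    have e1 : b.natAbs = 2 * u.natAbs := by rw [hbu, Int.natAbs_mul]; rfl
    rw [padicValInt, e1, padicValNat.mul (by norm_num) (by simpa using hu0),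
      padicValNat.self (by norm_num), padicValNat.eq_zero_of_not_dvd natAbs_u_odd]
  have hnd : ((n : ℤ) - 2).natAbs = n - 2 := by
    have e : (n : ℤ) - 2 = ((n - 2 : ℕ) : ℤ) := by
      have : (2 : ℤ) ≤ (n : ℤ) := by exact_mod_cast (by omega : 2 ≤ n)
      push_cast [Nat.cast_sub (by omega : 2 ≤ n)]
      ring
    rw [e, Int.natAbs_natCast]
  have hval_c : padicValInt 2 c = 2 + padicValNat 2 k := by
    have e1 : c.natAbs = (n - 2) * t.natAbs := by rw [hcc, Int.natAbs_mul, hnd]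
    have hn2ne : n - 2 ≠ 0 := by omega
    have htne : t.natAbs ≠ 0 := by simpa using ht0
    rw [padicValInt, e1, padicValNat.mul hn2ne htne,
      padicValNat.eq_zero_of_not_dvd natAbs_t_odd]
    have e2 : n - 2 = 2 ^ 2 * (3 * k) := by omega
    rw [e2, padicValNat.mul (by norm_num) (by omega),
      padicValNat.prime_pow, padicValNat.mul (by norm_num) (by omega),
      padicValNat.eq_zero_of_not_dvd (by norm_num)]
    omega
  have hbne : b ≠ 0 := by
    rw [hbu]
    exact mul_ne_zero (by norm_num) hu0
  have hcne : c ≠ 0 := by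
    rw [hcc]
    exact mul_ne_zero hd0 ht0
  rw [hfact, padicValInt.mul hbne hcne, hval_b, hval_c]
  omega
end

section
/- Define integer sequences h(0)=h(1)=1 and h(n+1) = h(n) + Σ_{k=1}^{n-1} C(n,k) h(k) h(n-k) for n ≥ 1. Let H(x) = Σ h(n) x^n/n!. Then H satisfies the differential equation H'(x) = H(x)^2 - H(x) + 1 with H(0) = 1 (as a formal power series identity over ℚ). -/
open PowerSeries

theorem stmt15 (h : ℕ → ℤ)
    (hh0 : h 0 = 1) (hh1 : h 1 = 1)
    (hh : ∀ n : ℕ, 1 ≤ n →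
      h (n + 1) = h n + ∑ k ∈ Finset.Ico 1 n, (n.choose k : ℤ) * h k * h (n - k)) :
    PowerSeries.derivative ℚ (PowerSeries.mk fun n => (h n : ℚ) / n.factorial) =
      (PowerSeries.mk fun n => (h n : ℚ) / n.factorial) ^ 2 -
        (PowerSeries.mk fun n => (h n : ℚ) / n.factorial) + 1 ∧
    PowerSeries.constantCoeff (R := ℚ) (PowerSeries.mk fun n => (h n : ℚ) / n.factorial) = 1 := by
  constructor
  · ext n
    rw [PowerSeries.coeff_derivative]
    simp only [map_add, map_sub, pow_two, PowerSeries.coeff_mul, PowerSeries.coeff_one,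
      PowerSeries.coeff_mk]
    rw [Finset.Nat.sum_antidiagonal_eq_sum_range_succ_mk]
    rcases Nat.eq_zero_or_pos n with rfl | hn
    · simp [hh0, hh1]
    · rw [if_neg hn.ne']
      have key : ∀ k ∈ Finset.range (n+1),
        (h k : ℚ)/k.factorial * ((h (n-k) : ℚ)/(n-k).factorial)
          = (n.choose k : ℚ) * h k * h (n-k) / n.factorial := by
        intro k hk
        rw [Finset.mem_range, Nat.lt_succ_iff] at hk
        have hc : (n.choose k : ℚ) * k.factorial * (n-k).factorial = n.factorial := by
          exact_mod_cast Nat.choose_mul_factorial_mul_factorial hk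
        have hk1 : (k.factorial : ℚ) ≠ 0 := Nat.cast_ne_zero.2 k.factorial_ne_zero
        have hk2 : ((n-k).factorial : ℚ) ≠ 0 := Nat.cast_ne_zero.2 (n-k).factorial_ne_zero
        have hn1 : (n.factorial : ℚ) ≠ 0 := Nat.cast_ne_zero.2 n.factorial_ne_zero
        rw [← hc, div_mul_div_comm]
        rw [div_eq_div_iff (by exact mul_ne_zero hk1 hk2) (by rw [hc]; exact hn1)]
        ring
      rw [Finset.sum_congr rfl key, ← Finset.sum_div, Finset.sum_range_succ,
        Finset.range_eq_Ico, Finset.sum_eq_sum_Ico_succ_bot hn]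
      simp only [Nat.choose_zero_right, Nat.choose_self, hh0, Nat.sub_zero, Nat.sub_self]
      rw [hh n hn]
      have hn1 : (n.factorial : ℚ) ≠ 0 := Nat.cast_ne_zero.2 n.factorial_ne_zero
      have hn2 : ((n+1).factorial : ℚ) ≠ 0 := Nat.cast_ne_zero.2 (n+1).factorial_ne_zero
      rw [Nat.factorial_succ] at hn2 ⊢
      push_cast
      field_simp
      ring
  · simp [hh0]
end

section
/- The functions H(x) = 1/2 + (√3/2)tan(π/6 + x√3/2), G(x) = sec(π/6 + x√3/2)·((√3/2)e^{x/2} - sin(x√3/2)), and F(x) = 2 + (√3/2)e^{x/2}(x-1)·sec(π/6 + x√3/2) satisfy: 1 + G'(x) = H(x)G(x) and 1 + F'(x) = G(x) - H(x) + H(x)F(x), with F(0) = G(0) = H(0) = 1, on a neighborhood of 0 where cos(π/6 + x√3/2) ≠ 0. -/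
open Real

noncomputable def Hfun (x : ℝ) : ℝ :=
  1 / 2 + (Real.sqrt 3 / 2) * Real.tan (π / 6 + x * Real.sqrt 3 / 2)

noncomputable def Gfun (x : ℝ) : ℝ :=
  (Real.cos (π / 6 + x * Real.sqrt 3 / 2))⁻¹ *
    ((Real.sqrt 3 / 2) * Real.exp (x / 2) - Real.sin (x * Real.sqrt 3 / 2))

noncomputable def Ffun (x : ℝ) : ℝ :=
  2 + (Real.sqrt 3 / 2) * Real.exp (x / 2) * (x - 1) *
    (Real.cos (π / 6 + x * Real.sqrt 3 / 2))⁻¹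

set_option maxHeartbeats 1000000 in
theorem stmt17 :
    Ffun 0 = 1 ∧ Gfun 0 = 1 ∧ Hfun 0 = 1 ∧
    ∀ x : ℝ, Real.cos (π / 6 + x * Real.sqrt 3 / 2) ≠ 0 →
      HasDerivAt Gfun (Hfun x * Gfun x - 1) x ∧
      HasDerivAt Ffun (Gfun x - Hfun x + Hfun x * Ffun x - 1) x := by
  have h3 : Real.sqrt 3 ^ 2 = 3 := Real.sq_sqrt (by norm_num)
  have h3' : Real.sqrt 3 ^ 3 = 3 * Real.sqrt 3 := by
    rw [pow_succ, h3]
  have h3'' : Real.sqrt 3 ^ 4 = 9 := by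
    nlinarith [h3]
  have h3ne : Real.sqrt 3 ≠ 0 := by positivity
  refine ⟨?_, ?_, ?_, ?_⟩
  · simp only [Ffun, zero_mul, zero_div, add_zero, Real.cos_pi_div_six, Real.exp_zero,
      mul_one, zero_sub]
    field_simp
    ring
  · simp only [Gfun, zero_mul, zero_div, add_zero, Real.cos_pi_div_six, Real.exp_zero,
      Real.sin_zero, mul_one, sub_zero]
    field_simp
  · simp only [Hfun, zero_mul, zero_div, add_zero, Real.tan_eq_sin_div_cos,
      Real.sin_pi_div_six, Real.cos_pi_div_six]
    field_simp
    linarith [h3]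
  · intro x hx
    have hθ : HasDerivAt (fun y : ℝ => π / 6 + y * Real.sqrt 3 / 2) (Real.sqrt 3 / 2) x := by
      simpa using (((hasDerivAt_id x).mul_const (Real.sqrt 3)).div_const 2).const_add (π / 6)
    have hcos := hθ.cos
    have hinv := hcos.inv hx
    have hlin : HasDerivAt (fun y : ℝ => y * Real.sqrt 3 / 2) (Real.sqrt 3 / 2) x := by
      simpa using ((hasDerivAt_id x).mul_const (Real.sqrt 3)).div_const 2
    have hsin := hlin.sin
    have hexp : HasDerivAt (fun y : ℝ => Real.exp (y / 2)) (Real.exp (x / 2) * (1 / 2)) x := by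
      simpa using ((hasDerivAt_id x).div_const 2).exp
    have hs : Real.sin (x * Real.sqrt 3 / 2)
        = Real.sqrt 3 / 2 * Real.sin (π / 6 + x * Real.sqrt 3 / 2)
          - 1 / 2 * Real.cos (π / 6 + x * Real.sqrt 3 / 2) := by
      rw [show x * Real.sqrt 3 / 2 = (π / 6 + x * Real.sqrt 3 / 2) - π / 6 by ring,
        Real.sin_sub, Real.sin_pi_div_six, Real.cos_pi_div_six]; ring
    have hc : Real.cos (x * Real.sqrt 3 / 2)
        = Real.sqrt 3 / 2 * Real.cos (π / 6 + x * Real.sqrt 3 / 2)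
          + 1 / 2 * Real.sin (π / 6 + x * Real.sqrt 3 / 2) := by
      rw [show x * Real.sqrt 3 / 2 = (π / 6 + x * Real.sqrt 3 / 2) - π / 6 by ring,
        Real.cos_sub, Real.sin_pi_div_six, Real.cos_pi_div_six]; ring
    have hx' : Real.cos (Real.sqrt 3 * x * (1 / 2) + π * (1 / 6)) ≠ 0 := by
      rwa [show Real.sqrt 3 * x * (1 / 2) + π * (1 / 6) = π / 6 + x * Real.sqrt 3 / 2 by ring]
    constructor
    · have hA := (hexp.const_mul (Real.sqrt 3 / 2)).sub hsin
      have hG : HasDerivAt Gfun _ x := hinv.mul hA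
      convert hG using 1
      simp only [Hfun, Gfun, Real.tan_eq_sin_div_cos, hs, hc, Pi.inv_apply, Pi.mul_apply, Pi.sub_apply, id_eq]
      set S := Real.sin (π / 6 + x * Real.sqrt 3 / 2) with hSdef
      set C := Real.cos (π / 6 + x * Real.sqrt 3 / 2) with hCdef
      field_simp [hx]
      ring_nf
      simp only [h3, h3', h3'']
    · have hB := ((hexp.const_mul (Real.sqrt 3 / 2)).mul ((hasDerivAt_id x).sub_const 1)).mul hinv
      have hF : HasDerivAt Ffun _ x := hB.const_add 2
      convert hF using 1
      simp only [Hfun, Gfun, Ffun, Real.tan_eq_sin_div_cos, hs, hc, Pi.inv_apply, Pi.mul_apply, Pi.sub_apply, id_eq]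
      set S := Real.sin (π / 6 + x * Real.sqrt 3 / 2) with hSdef
      set C := Real.cos (π / 6 + x * Real.sqrt 3 / 2) with hCdef
      field_simp [hx]
      ring_nf
end
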